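/- Let f₄(x) = sin(xπ/2)·sin(xπ/3)·sin(xπ/5)·sin(xπ/7). Then the set of x in the interval [7/2, 49 + 1/3] with f₄(x) = 0, f₄′(x) = 0 and f₄″(x) ≠ 0 (the double zeros of f₄ in that interval) is exactly {6, 10, 12, 14, 15, 18, 20, 21, 24, 28, 35, 36, 40, 45, 48}. -/

import Mathlib

/-!
Every factor `sin (x π / p)` has only simple zeros, at the multiples of `p`, so the vanishing
order of `f₄` at `x` is the number of `p ∈ {2, 3, 5, 7}` with `p ∣ x`. A double zero is a point of
vanishing order exactly two: an integer divisible by exactly two of the four primes, and these are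
listed by a finite check over the integers in `[4, 49]`.
-/

noncomputable def pruitt4 : ℝ → ℝ := fun x =>
  Real.sin (x * Real.pi / 2) * Real.sin (x * Real.pi / 3) * Real.sin (x * Real.pi / 5) *
    Real.sin (x * Real.pi / 7)

open Real Finset

theorem analyticOrderAt_eq_two_iff {𝕜 E : Type*} [NontriviallyNormedField 𝕜] [CharZero 𝕜]
    [NormedAddCommGroup E] [NormedSpace 𝕜 E] [CompleteSpace E] {f : 𝕜 → E} {z : 𝕜}
    (hf : AnalyticAt 𝕜 f z) :
    analyticOrderAt f z = 2 ↔ f z = 0 ∧ deriv f z = 0 ∧ deriv (deriv f) z ≠ 0 := by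
  rw [← Nat.cast_ofNat, analyticOrderAt_eq_nat_iff_iteratedDeriv_eq_zero hf]
  simp [Nat.le_one_iff_eq_zero_or_eq_one, or_imp, forall_and, iteratedDeriv_succ, and_assoc]

theorem analyticOrderAt_prod {𝕜 ι : Type*} [NontriviallyNormedField 𝕜] {s : Finset ι}
    {f : ι → 𝕜 → 𝕜} {z : 𝕜} (hf : ∀ i ∈ s, AnalyticAt 𝕜 (f i) z) :
    analyticOrderAt (∏ i ∈ s, f i) z = ∑ i ∈ s, analyticOrderAt (f i) z := by
  classical
  induction s using Finset.induction_on with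
  | empty => simp [analyticOrderAt_eq_zero]
  | insert i s hi ih =>
    have hs : ∀ j ∈ s, AnalyticAt 𝕜 (f j) z := fun j hj => hf j (mem_insert_of_mem hj)
    rw [prod_insert hi, sum_insert hi,
      analyticOrderAt_mul (hf i (mem_insert_self i s)) (Finset.analyticAt_prod _ hs), ih hs]

namespace Real

theorem analyticOrderAt_sin (x : ℝ) :
    analyticOrderAt sin x = if sin x = 0 then 1 else 0 := by
  split_ifs with h
  · refine analyticAt_sin.analyticOrderAt_eq_one_of_zero_deriv_ne_zero h ?_
    rcases sin_eq_zero_iff_cos_eq.1 h with hcos | hcos <;> simp [hcos]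
  · exact analyticAt_sin.analyticOrderAt_eq_zero.mpr h

theorem analyticOrderAt_sin_mul_pi_div {c : ℝ} (hc : c ≠ 0) (x : ℝ) :
    analyticOrderAt (fun y => sin (y * π / c)) x = if sin (x * π / c) = 0 then 1 else 0 := by
  rw [← analyticOrderAt_sin]
  exact analyticOrderAt_comp_of_deriv_ne_zero (f := sin) (by fun_prop) (by simp [hc, pi_ne_zero])

theorem sin_mul_pi_div_eq_zero_iff {c : ℝ} (hc : c ≠ 0) (x : ℝ) :
    sin (x * π / c) = 0 ↔ ∃ n : ℤ, x = n * c := by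
  rw [sin_eq_zero_iff]
  refine exists_congr fun n => ?_
  rw [eq_div_iff hc, mul_right_comm, mul_left_inj' pi_ne_zero, eq_comm]

theorem sin_intCast_mul_pi_div_eq_zero_iff {p : ℤ} (hp : p ≠ 0) (n : ℤ) :
    sin (n * π / p) = 0 ↔ p ∣ n := by
  rw [sin_mul_pi_div_eq_zero_iff (Int.cast_ne_zero.2 hp)]
  refine exists_congr fun k => ?_
  rw [mul_comm p k]
  exact_mod_cast Iff.rfl

theorem analyticOrderAt_prod_sin_mul_pi_div {s : Finset ℤ} (hs : 0 ∉ s) (x : ℝ) :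
    analyticOrderAt (∏ p ∈ s, fun y => sin (y * π / p)) x =
      (#{p ∈ s | sin (x * π / ((p : ℤ) : ℝ)) = 0} : ℕ) := by
  rw [analyticOrderAt_prod fun p _ => by fun_prop, natCast_card_filter]
  exact sum_congr rfl fun p hp =>
    analyticOrderAt_sin_mul_pi_div (Int.cast_ne_zero.2 (ne_of_mem_of_not_mem hp hs)) x

end Real

theorem intCast_mem_Icc_iff (n : ℤ) (a b : ℝ) : (n : ℝ) ∈ Set.Icc a b ↔ n ∈ Icc ⌈a⌉ ⌊b⌋ := by
  simp [Int.ceil_le, Int.le_floor]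

theorem filter_Icc_card_filter_dvd_eq_two :
    {n ∈ Icc (4 : ℤ) 49 | #{p ∈ ({2, 3, 5, 7} : Finset ℤ) | p ∣ n} = 2} =
      {6, 10, 12, 14, 15, 18, 20, 21, 24, 28, 35, 36, 40, 45, 48} := by
  decide

theorem intCast_mem_Icc_and_card_filter_eq_two_iff (n : ℤ) :
    (n : ℝ) ∈ Set.Icc (7 / 2 : ℝ) (49 + 1 / 3) ∧
        #{p ∈ ({2, 3, 5, 7} : Finset ℤ) | sin (n * π / ((p : ℤ) : ℝ)) = 0} = 2 ↔
      n ∈ ({6, 10, 12, 14, 15, 18, 20, 21, 24, 28, 35, 36, 40, 45, 48} : Finset ℤ) := by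
  have hceil : ⌈(7 / 2 : ℝ)⌉ = 4 := by norm_num
  have hfloor : ⌊(49 + 1 / 3 : ℝ)⌋ = 49 := by norm_num
  rw [intCast_mem_Icc_iff, hceil, hfloor, ← filter_Icc_card_filter_dvd_eq_two, mem_filter,
    filter_congr fun p hp =>
      sin_intCast_mul_pi_div_eq_zero_iff (ne_of_mem_of_not_mem hp (by decide)) n]

theorem pruitt4_eq_prod :
    pruitt4 = ∏ p ∈ ({2, 3, 5, 7} : Finset ℤ), fun y => sin (y * π / p) := by
  ext x
  simp [pruitt4, Finset.prod_apply, mul_assoc]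

/-- The set 𝒵₂ of double zeros of the fourth Pruitt function in `[7/2, 49 + 1/3]`. -/
theorem stmt_15 :
    {x : ℝ | x ∈ Set.Icc (7 / 2 : ℝ) (49 + 1 / 3) ∧ pruitt4 x = 0 ∧ deriv pruitt4 x = 0 ∧
      deriv (deriv pruitt4) x ≠ 0} =
    ({6, 10, 12, 14, 15, 18, 20, 21, 24, 28, 35, 36, 40, 45, 48} : Set ℝ) := by
  have himage : ({6, 10, 12, 14, 15, 18, 20, 21, 24, 28, 35, 36, 40, 45, 48} : Set ℝ) =
      Int.cast '' ↑({6, 10, 12, 14, 15, 18, 20, 21, 24, 28, 35, 36, 40, 45, 48} : Finset ℤ) := by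
    simp [Set.image_insert_eq]
  ext x
  rw [Set.mem_ofPred_eq, ← analyticOrderAt_eq_two_iff (by unfold pruitt4; fun_prop),
    pruitt4_eq_prod, analyticOrderAt_prod_sin_mul_pi_div (by decide),
    ← Nat.cast_ofNat (R := ℕ∞) (n := 2), Nat.cast_inj, himage]
  constructor
  · rintro ⟨hx, hcard⟩
    obtain ⟨p, hp⟩ := card_pos.1 (hcard ▸ two_pos)
    obtain ⟨hp, hsin⟩ := mem_filter.1 hp
    obtain ⟨k, rfl⟩ := (sin_mul_pi_div_eq_zero_iff
      (Int.cast_ne_zero.2 (ne_of_mem_of_not_mem hp (by decide))) x).1 hsin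
    rw [← Int.cast_mul] at hx hcard
    exact ⟨k * p, (intCast_mem_Icc_and_card_filter_eq_two_iff _).1 ⟨hx, hcard⟩, Int.cast_mul k p⟩
  · rintro ⟨n, hn, rfl⟩
    exact (intCast_mem_Icc_and_card_filter_eq_two_iff n).2 hn
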